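/- arXiv:2007.10632 — 5 statements merged into one kernel-verified Lean document; each statement's English description precedes it below -/
import Mathlib

section
/- Let A be a finite abelian group and φ : A → A an endomorphism. Suppose α ∈ A has order q and φᵗ(α) ≠ 0 for all t ≥ 0. Then there exists an element (a_t)_{t∈ℕ} of the inverse limit of the tower ⋯ →φ A →φ A (i.e., a sequence with φ(a_{t+1}) = a_t for all t) which is nonzero and whose order divides q. -/
private lemma iter_nsmul {A : Type*} [AddCommGroup A] (φ : A →+ A) (q : ℕ) :
    ∀ (k : ℕ) (x : A), φ^[k] (q • x) = q • φ^[k] x := by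
  intro k
  induction k with
  | zero => intro x; simp
  | succ n ih =>
    intro x
    rw [Function.iterate_succ_apply, Function.iterate_succ_apply, map_nsmul, ih]

theorem inverse_limit_nonzero_element_of_never_vanishing
    (A : Type*) [AddCommGroup A] [Finite A] (φ : A →+ A)
    (α : A) (q : ℕ) (hq : 1 ≤ q) (hord : addOrderOf α = q)
    (h : ∀ t : ℕ, (φ^[t]) α ≠ 0) :
    ∃ a : ℕ → A, (∀ t : ℕ, φ (a (t + 1)) = a t) ∧ (∃ t : ℕ, a t ≠ 0) ∧
      ∀ t : ℕ, q • a t = 0 := by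
  obtain ⟨m, m', hne, heq⟩ :=
    Finite.exists_ne_map_eq_of_infinite (fun n : ℕ => φ^[n] α)
  wlog hlt : m < m' generalizing m m'
  · exact this m' m hne.symm heq.symm (by omega)
  set p := m' - m with hp
  have hp1 : 1 ≤ p := by omega
  set b := φ^[m] α with hb
  have hcycle : φ^[p] b = b := by
    have : φ^[p + m] α = φ^[m] α := by
      have : p + m = m' := by omega
      rw [this]; exact heq.symm
    rw [hb, ← Function.iterate_add_apply, this]
  have qb : q • b = 0 := by
    have hqα : q • α = 0 := by rw [← hord]; exact addOrderOf_nsmul_eq_zero α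
    rw [hb, ← iter_nsmul, hqα, Function.iterate_fixed (map_zero φ)]
  refine ⟨fun t => φ^[(p - 1) * t] b, ?_, ⟨0, by simpa using h m⟩, ?_⟩
  · intro t
    have harith : (p - 1) * (t + 1) + 1 = (p - 1) * t + p := by
      obtain ⟨n, hn⟩ : ∃ n, p = n + 1 := ⟨p - 1, by omega⟩
      have h1 : p - 1 = n := by omega
      rw [h1, hn]; ring
    calc φ (φ^[(p - 1) * (t + 1)] b) = φ^[(p - 1) * (t + 1) + 1] b := by
          rw [Function.iterate_succ_apply']
      _ = φ^[(p - 1) * t + p] b := by rw [harith]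
      _ = φ^[(p - 1) * t] (φ^[p] b) := by rw [Function.iterate_add_apply]
      _ = φ^[(p - 1) * t] b := by rw [hcycle]
  · intro t
    rw [← iter_nsmul, qb, Function.iterate_fixed (map_zero φ)]
end

section
/- Let A be a finitely generated abelian group, q ≥ 1 an integer, and φ : A → A an endomorphism. If the inverse limit lim(⋯ →φ A →φ A) is uniquely q-divisible (i.e., multiplication by q is bijective on it), then for every α ∈ A with q•α = 0 there exists t ≥ 0 such that φᵗ(α) = 0. -/
theorem torsion_killed_of_uniquely_divisible_inverse_limit
    (A : Type*) [AddCommGroup A] [AddGroup.FG A] (q : ℕ) (hq : 1 ≤ q)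
    (φ : A →+ A)
    (hsurj : ∀ a : ℕ → A, (∀ t, φ (a (t + 1)) = a t) →
      ∃ b : ℕ → A, (∀ t, φ (b (t + 1)) = b t) ∧ ∀ t, q • b t = a t)
    (hinj : ∀ b c : ℕ → A, (∀ t, φ (b (t + 1)) = b t) → (∀ t, φ (c (t + 1)) = c t) →
      (∀ t, q • b t = q • c t) → b = c) :
    ∀ α : A, q • α = 0 → ∃ t : ℕ, (φ^[t]) α = 0 := by
  classical
  intro α hα
  -- the q-torsion subgroup
  set T : AddSubgroup A :=
    { carrier := {x | q • x = 0}
      zero_mem' := by simp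
      add_mem' := by intro a b ha hb; simp only [Set.mem_setOf_eq] at *; rw [smul_add, ha, hb, add_zero]
      neg_mem' := by intro a ha; simp only [Set.mem_setOf_eq] at *; rw [smul_neg, ha, neg_zero] }
    with hT
  have hmemT : ∀ x : A, x ∈ T ↔ q • x = 0 := fun x => Iff.rfl
  -- T is finite
  have hfinmod : Module.Finite ℤ A := Module.Finite.iff_addGroup_fg.mpr ‹_›
  have hNoeth : IsNoetherian ℤ A := inferInstance
  have hTfin : Finite T := by
    have : Finite (AddSubgroup.toIntSubmodule T) := by
      apply Module.finite_of_fg_torsion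
      intro x
      refine ⟨⟨(q : ℤ), mem_nonZeroDivisors_of_ne_zero (by exact_mod_cast (by omega : q ≠ 0))⟩, ?_⟩
      have hx : q • (x : A) = 0 := x.2
      ext
      push_cast
      show (q : ℤ) • (x : A) = 0
      rw [natCast_zsmul, hx]
    exact this
  have : Fintype T := Fintype.ofFinite T
  -- φ restricts to f : T → T
  have hφT : ∀ x : A, x ∈ T → φ x ∈ T := by
    intro x hx
    rw [hmemT] at hx ⊢
    rw [← map_nsmul, hx, map_zero]
  set f : T → T := fun x => ⟨φ x, hφT x x.2⟩ with hf
  -- iterate of f corresponds to iterate of φ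
  have hiter : ∀ (n : ℕ) (x : T), ((f^[n] x : T) : A) = φ^[n] (x : A) := by
    intro n
    induction n with
    | zero => intro x; simp
    | succ n ih =>
      intro x
      rw [Function.iterate_succ_apply, Function.iterate_succ_apply, ih]
  -- the descending chain of images stabilizes
  set S : ℕ → Finset T := fun n => Finset.image (f^[n]) Finset.univ with hS
  have hSmono : ∀ n, S (n + 1) ⊆ S n := by
    intro n y hy
    simp only [hS, Finset.mem_image] at hy ⊢
    obtain ⟨x, -, hx⟩ := hy
    exact ⟨f x, Finset.mem_univ _, by rw [← hx, Function.iterate_succ_apply]⟩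
  obtain ⟨N, hN⟩ : ∃ N, ((S (N + 1)).card : ℕ) = (S N).card := by
    set c := sInf (Set.range fun n => (S n).card) with hc
    have hmem : c ∈ Set.range fun n => (S n).card :=
      Nat.sInf_mem ⟨(S 0).card, 0, rfl⟩
    obtain ⟨N, hN⟩ := hmem
    refine ⟨N, le_antisymm (Finset.card_le_card (hSmono N)) ?_⟩
    have hN' : (S N).card = c := hN
    rw [hN']
    exact Nat.sInf_le ⟨N + 1, rfl⟩
  have hSeq : S (N + 1) = S N := Finset.eq_of_subset_of_card_le (hSmono N) (le_of_eq hN.symm)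
  -- every element of S N has a preimage in S N
  have hsurjS : ∀ y ∈ S N, ∃ x ∈ S N, f x = y := by
    intro y hy
    rw [← hSeq] at hy
    simp only [hS, Finset.mem_image] at hy
    obtain ⟨x, -, hx⟩ := hy
    refine ⟨f^[N] x, ?_, ?_⟩
    · simp only [hS, Finset.mem_image]; exact ⟨x, Finset.mem_univ _, rfl⟩
    · rw [← hx, Function.iterate_succ_apply']
  -- build the backward sequence
  set g : {y : T // y ∈ S N} → {y : T // y ∈ S N} := fun y =>
    ⟨(hsurjS y.1 y.2).choose, (hsurjS y.1 y.2).choose_spec.1⟩ with hg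
  have hgf : ∀ y, f (g y).1 = y.1 := fun y => (hsurjS y.1 y.2).choose_spec.2
  have hα' : α ∈ T := hα
  set x₀ : {y : T // y ∈ S N} := ⟨f^[N] ⟨α, hα'⟩, by
    simp only [hS, Finset.mem_image]; exact ⟨⟨α, hα'⟩, Finset.mem_univ _, rfl⟩⟩ with hx₀
  set b : ℕ → A := fun t => (((g^[t] x₀).1 : T) : A) with hb
  have hbseq : ∀ t, φ (b (t + 1)) = b t := by
    intro t
    have : f (g^[t + 1] x₀).1 = (g^[t] x₀).1 := by
      rw [Function.iterate_succ_apply']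
      exact hgf _
    have := congrArg (fun z : T => (z : A)) this
    exact this
  have hzero : b = fun _ => (0 : A) := by
    apply hinj b (fun _ => 0) hbseq (by intro t; simp)
    intro t
    have h2 : q • b t = 0 := ((g^[t] x₀).1).2
    simpa using h2
  refine ⟨N, ?_⟩
  have hb0 : b 0 = φ^[N] α := by
    simp only [hb, Function.iterate_zero_apply, hx₀]
    exact hiter N ⟨α, hα'⟩
  rw [← hb0, hzero]
end

section
/- Let A be a finitely generated abelian group and let (φ_s)_{s ≥ 1} be a family of endomorphisms of A indexed by positive integers satisfying φ_s ∘ φ_t = φ_{st}, such that: (i) for every torsion element α ∈ A there exists s ≥ 1 with φ_s(α) = 0, and (ii) for every s ≥ 1 and a ∈ A, φ_s(a) ∈ sA + T(A). Then for every r ≥ 1 there exists s ≥ 1 such that φ_s(A) ⊆ rA. -/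
theorem family_image_in_multiples
    (A : Type*) [AddCommGroup A] [AddGroup.FG A]
    (φ : ℕ → A →+ A)
    (hmul : ∀ s t : ℕ, 1 ≤ s → 1 ≤ t → (φ s).comp (φ t) = φ (s * t))
    (htor : ∀ α : A, IsOfFinAddOrder α → ∃ s : ℕ, 1 ≤ s ∧ φ s α = 0)
    (hdiv : ∀ s : ℕ, 1 ≤ s → ∀ a : A, ∃ b τ : A, IsOfFinAddOrder τ ∧ φ s a = s • b + τ) :
    ∀ r : ℕ, 1 ≤ r → ∃ s : ℕ, 1 ≤ s ∧ ∀ a : A, ∃ b : A, φ s a = r • b := by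
  classical
  intro r hr
  have hcomp : ∀ s t : ℕ, 1 ≤ s → 1 ≤ t → ∀ x : A, φ (s * t) x = φ s (φ t x) := by
    intro s t hs ht x
    rw [← hmul s t hs ht]; rfl
  have hpres : ∀ s : ℕ, 1 ≤ s → ∀ τ : A, IsOfFinAddOrder τ → IsOfFinAddOrder (φ s τ) := by
    intro s hs τ hτ
    rw [isOfFinAddOrder_iff_nsmul_eq_zero] at hτ ⊢
    obtain ⟨n, hn, h⟩ := hτ
    exact ⟨n, hn, by rw [← map_nsmul, h, map_zero]⟩
  have kill : ∀ F : Finset A, (∀ τ ∈ F, IsOfFinAddOrder τ) →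
      ∃ s : ℕ, 1 ≤ s ∧ ∀ τ ∈ F, φ s τ = 0 := by
    intro F
    induction F using Finset.induction_on with
    | empty => exact fun _ => ⟨1, le_refl 1, by simp⟩
    | @insert x F hx ih =>
      intro h
      obtain ⟨s, hs, hF⟩ := ih (fun τ hτ => h τ (Finset.mem_insert_of_mem hτ))
      have hx' : IsOfFinAddOrder (φ s x) := hpres s hs x (h x (Finset.mem_insert_self x F))
      obtain ⟨t, ht, htx⟩ := htor _ hx'
      refine ⟨t * s, Nat.one_le_iff_ne_zero.mpr (by positivity), ?_⟩
      intro τ hτ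
      rcases Finset.mem_insert.mp hτ with rfl | hτ
      · rw [hcomp t s ht hs, htx]
      · rw [hcomp t s ht hs, hF τ hτ, map_zero]
  obtain ⟨S, hS⟩ : (⊤ : AddSubgroup A).FG := AddGroup.FG.out
  choose bf τf hτf hφ using hdiv r hr
  obtain ⟨s, hs, hkill⟩ := kill (S.image τf) (by
    intro τ hτ
    obtain ⟨a, _, rfl⟩ := Finset.mem_image.mp hτ
    exact hτf a)
  refine ⟨s * r, Nat.one_le_iff_ne_zero.mpr (by positivity), ?_⟩
  have key : ∀ a ∈ (S : Set A), φ (s * r) a ∈ (r • (AddMonoidHom.id A)).range := by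
    intro a ha
    refine ⟨φ s (bf a), ?_⟩
    rw [hcomp s r hs hr, hφ a, map_add, map_nsmul,
      hkill (τf a) (Finset.mem_image_of_mem τf ha), add_zero]
    simp
  have hle : (⊤ : AddSubgroup A) ≤
      ((r • (AddMonoidHom.id A)).range).comap (φ (s * r)) := by
    rw [← hS]
    exact (AddSubgroup.closure_le _).mpr key
  intro a
  obtain ⟨y, hy⟩ := hle (AddSubgroup.mem_top a)
  refine ⟨y, ?_⟩
  simpa using hy.symm
end

section
/- Let B be an m × n integer matrix which is not the zero matrix. Then there exists a positive integer t and an invertible t × t integer-entried matrix B' (invertible over ℚ) such that for every family of integers a_{ij} (1 ≤ i,j ≤ r) and c_q (1 ≤ q ≤ s), the system of equations ∑_{i,j} a_{ij}^{(q)} u_iᵀ B v_j = c_q (q = 1,…,s) has a solution with u_i ∈ ℤᵐ, v_j ∈ ℤⁿ if and only if the system ∑_{i,j} a_{ij}^{(q)} (u'_i)ᵀ B' v'_j = c_q has a solution with u'_i, v'_j ∈ ℤᵗ. -/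
open Matrix

/-- Given a basis `b` of `ℤ^m` and a target `g`, there is `u` with `u ⬝ᵥ b l = g l`. -/
lemma exists_dotProduct_basis_eq (m : ℕ) (b : Module.Basis (Fin m) ℤ (Fin m → ℤ))
    (g : Fin m → ℤ) : ∃ u : Fin m → ℤ, ∀ l : Fin m, u ⬝ᵥ b l = g l := by
  classical
  set A : Matrix (Fin m) (Fin m) ℤ := Matrix.of (fun l x => b l x) with hA
  have hAeq : A = ((Pi.basisFun ℤ (Fin m)).toMatrix b)ᵀ := by
    ext l x
    simp [hA, Module.Basis.toMatrix_apply, Matrix.transpose_apply]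
  haveI : Invertible ((Pi.basisFun ℤ (Fin m)).toMatrix b) :=
    (Pi.basisFun ℤ (Fin m)).invertibleToMatrix b
  haveI : Invertible A := by rw [hAeq]; infer_instance
  refine ⟨⅟A *ᵥ g, fun l => ?_⟩
  have h1 : A *ᵥ (⅟A *ᵥ g) = g := by
    rw [Matrix.mulVec_mulVec, mul_invOf_self, Matrix.one_mulVec]
  have h2 : (A *ᵥ (⅟A *ᵥ g)) l = g l := by rw [h1]
  calc (⅟A *ᵥ g) ⬝ᵥ b l = b l ⬝ᵥ (⅟A *ᵥ g) := dotProduct_comm _ _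
    _ = (A *ᵥ (⅟A *ᵥ g)) l := by simp [Matrix.mulVec, hA, dotProduct]
    _ = g l := h2

lemma dot_sum {m t : ℕ} (u : Fin m → ℤ) (w : Fin t → Fin m → ℤ) :
    u ⬝ᵥ (∑ k, w k) = ∑ k, u ⬝ᵥ w k := by
  simp only [dotProduct, Finset.sum_apply, Finset.mul_sum]
  exact Finset.sum_comm

theorem matrix_reduction_to_invertible (m n : ℕ) (B : Matrix (Fin m) (Fin n) ℤ)
    (hB : B ≠ 0) :
    ∃ (t : ℕ) (_ : 0 < t) (B' : Matrix (Fin t) (Fin t) ℤ), B'.det ≠ 0 ∧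
      ∀ (r s : ℕ) (a : Fin s → Fin r → Fin r → ℤ) (c : Fin s → ℤ),
        (∃ (u : Fin r → Fin m → ℤ) (v : Fin r → Fin n → ℤ),
          ∀ q : Fin s, ∑ i : Fin r, ∑ j : Fin r,
            a q i j * (Matrix.vecMul (u i) B ⬝ᵥ v j) = c q) ↔
        (∃ (u' : Fin r → Fin t → ℤ) (v' : Fin r → Fin t → ℤ),
          ∀ q : Fin s, ∑ i : Fin r, ∑ j : Fin r,
            a q i j * (Matrix.vecMul (u' i) B' ⬝ᵥ v' j) = c q) := by
  classical
  -- M = range of B as a linear map ℤ^n → ℤ^m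
  set M : Submodule ℤ (Fin m → ℤ) := LinearMap.range B.mulVecLin with hM
  obtain ⟨t, bM, bN, f, d, snf⟩ := M.smithNormalForm (Pi.basisFun ℤ (Fin m))
  -- each d k is nonzero
  have hd : ∀ k, d k ≠ 0 := by
    intro k hk
    have := snf k
    rw [hk, zero_smul] at this
    exact bN.ne_zero k (Subtype.coe_injective (by simpa using this))
  -- t is positive
  have hB' : ∃ i j, B i j ≠ 0 := by
    by_contra h
    push_neg at h
    exact hB (by ext i j; simpa using h i j)
  obtain ⟨i0, j0, hij⟩ := hB'
  have ht : 0 < t := by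
    rcases Nat.eq_zero_or_pos t with h0 | h
    · exfalso
      subst h0
      haveI : Subsingleton M := by
        have e := bN.repr
        haveI : Subsingleton (Fin 0 →₀ ℤ) := by
          constructor; intro x y; ext i; exact absurd i.2 (Nat.not_lt_zero _)
        exact e.toEquiv.subsingleton
      have hmem : (B *ᵥ Pi.single j0 1) ∈ M := ⟨Pi.single j0 1, rfl⟩
      have : (⟨B *ᵥ Pi.single j0 1, hmem⟩ : M) = (0 : M) := Subsingleton.elim _ _
      have h2 : (B *ᵥ Pi.single j0 1) = 0 := congrArg Subtype.val this
      have h3 : (B *ᵥ Pi.single j0 1) i0 = B i0 j0 := by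
        simp [Matrix.mulVec, dotProduct, Pi.single_apply]
      rw [h2] at h3
      exact hij (by simpa using h3.symm)
    · exact h
  refine ⟨t, ht, Matrix.diagonal d, ?_, ?_⟩
  · rw [Matrix.det_diagonal]
    exact Finset.prod_ne_zero_iff.mpr fun k _ => hd k
  intro r s a c
  -- key: the diagonal bilinear form
  have hdiag : ∀ (u' v' : Fin t → ℤ),
      Matrix.vecMul u' (Matrix.diagonal d) ⬝ᵥ v' = ∑ k, u' k * d k * v' k := by
    intro u' v'
    simp [dotProduct, Matrix.vecMul_diagonal]
  constructor
  · rintro ⟨u, v, hsol⟩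
    -- express B *ᵥ v j in the SNF basis
    set w : Fin r → M := fun j => ⟨B *ᵥ v j, ⟨v j, rfl⟩⟩ with hw
    refine ⟨fun i k => u i ⬝ᵥ bM (f k), fun j k => bN.repr (w j) k, fun q => ?_⟩
    rw [← hsol q]
    refine Finset.sum_congr rfl fun i _ => Finset.sum_congr rfl fun j _ => ?_
    congr 1
    rw [hdiag, ← Matrix.dotProduct_mulVec]
    have hwj : (B *ᵥ v j) = ∑ k, bN.repr (w j) k • ((bN k : Fin m → ℤ)) := by
      have := bN.sum_repr (w j)
      calc (B *ᵥ v j) = ((w j : M) : Fin m → ℤ) := rfl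
        _ = ((∑ k, bN.repr (w j) k • bN k : M) : Fin m → ℤ) := by rw [this]
        _ = ∑ k, bN.repr (w j) k • ((bN k : Fin m → ℤ)) := by
            push_cast [Submodule.coe_sum]
            rfl
    rw [hwj, dot_sum]
    refine Finset.sum_congr rfl fun k _ => ?_
    rw [snf k, dotProduct_smul, dotProduct_smul, smul_eq_mul, smul_eq_mul]
    ring
  · rintro ⟨u', v', hsol⟩
    -- choose u i pairing correctly with the basis bM
    have hu : ∀ i, ∃ u : Fin m → ℤ, ∀ l, u ⬝ᵥ bM l =
        ∑ k, if f k = l then u' i k else 0 :=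
      fun i => exists_dotProduct_basis_eq m bM _
    choose u hu using hu
    -- choose v j with B *ᵥ v j = ∑ k, v' j k • bN k
    have hv : ∀ j, ∃ v : Fin n → ℤ, B *ᵥ v = ∑ k, v' j k • ((bN k : Fin m → ℤ)) := by
      intro j
      have hmem : (∑ k, v' j k • ((bN k : Fin m → ℤ))) ∈ M := by
        apply Submodule.sum_mem
        intro k _
        exact Submodule.smul_mem _ _ (bN k).2
      obtain ⟨v, hv⟩ := hmem
      exact ⟨v, hv⟩
    choose v hv using hv
    refine ⟨u, v, fun q => ?_⟩
    rw [← hsol q]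
    refine Finset.sum_congr rfl fun i _ => Finset.sum_congr rfl fun j _ => ?_
    congr 1
    rw [hdiag, ← Matrix.dotProduct_mulVec, hv j, dot_sum]
    refine Finset.sum_congr rfl fun k _ => ?_
    rw [snf k]
    have h1 : u i ⬝ᵥ bM (f k) = u' i k := by
      rw [hu i (f k)]
      rw [Finset.sum_eq_single k]
      · simp
      · intro b _ hb
        simp [f.injective.ne hb]
      · simp
    rw [dotProduct_smul, dotProduct_smul, smul_eq_mul, smul_eq_mul, h1]
    ring
end

section
/- Let G be a finitely generated abelian group, r ≥ 1 an integer, S a nonempty set with a G-action, T = G with the G-action g • t = r•g + t, and f : S → T a G-equivariant map with finite fibers. Then the G-action on S is virtually free and faithful: it has finitely many orbits and every stabilizer is finite. -/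
theorem virtually_free_faithful_action_on_mapping_set
    (G : Type*) [AddCommGroup G] [AddGroup.FG G] (r : ℕ) (hr : 1 ≤ r)
    (S : Type*) [Nonempty S] [AddAction G S]
    (f : S → G) (heq : ∀ (g : G) (s : S), f (g +ᵥ s) = r • g + f s)
    (hfib : ∀ t : G, (f ⁻¹' {t}).Finite) :
    Finite (AddAction.orbitRel.Quotient G S) ∧
    ∀ s : S, Finite (AddAction.stabilizer G s) := by
  classical
  set φ : G →+ G := zsmulAddGroupHom (r : ℤ) with hφ
  have hφ_apply : ∀ g : G, φ g = r • g := by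
    intro g
    simp [hφ, zsmulAddGroupHom, natCast_zsmul]
  -- the kernel of multiplication by r is finite
  have hker : Finite φ.ker := by
    have : Module.Finite ℤ G := Module.Finite.iff_addGroup_fg.mpr ‹_›
    have hNoeth : IsNoetherian ℤ G := inferInstance
    have hfg : (AddSubgroup.toIntSubmodule φ.ker).FG :=
      IsNoetherian.noetherian _
    have : AddGroup.FG φ.ker := by
      rw [AddGroup.fg_iff_addMonoid_fg]
      exact AddMonoid.fg_iff_addSubmonoid_fg _ |>.mpr
        (by
          have := (Submodule.fg_iff_addSubgroup_fg (AddSubgroup.toIntSubmodule φ.ker)).mp hfg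
          exact (AddSubgroup.fg_iff_addSubmonoid_fg _).mp this)
    have htor : AddMonoid.IsTorsion φ.ker := by
      intro x
      refine isOfFinAddOrder_iff_nsmul_eq_zero.mpr ⟨r, hr, ?_⟩
      have hx : φ (x : G) = 0 := x.2
      ext
      push_cast
      rw [← hφ_apply]
      exact hx
    exact AddCommGroup.finite_of_fg_torsion _ htor
  -- the quotient G ⧸ rG is finite
  have hquot : Finite (G ⧸ φ.range) := by
    have : AddGroup.FG (G ⧸ φ.range) :=
      AddGroup.fg_of_surjective (f := QuotientAddGroup.mk' φ.range)
        (QuotientAddGroup.mk'_surjective _)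
    refine AddCommGroup.finite_of_fg_torsion _ ?_
    intro x
    refine isOfFinAddOrder_iff_nsmul_eq_zero.mpr ⟨r, hr, ?_⟩
    induction x using QuotientAddGroup.induction_on with
    | H g =>
      rw [← QuotientAddGroup.mk_nsmul, QuotientAddGroup.eq_zero_iff]
      exact ⟨g, by rw [hφ_apply]⟩
  constructor
  · -- finitely many orbits
    have hcompat : ∀ s₁ s₂ : S, AddAction.orbitRel G S s₁ s₂ →
        (QuotientAddGroup.mk (f s₁) : G ⧸ φ.range) = QuotientAddGroup.mk (f s₂) := by
      intro s₁ s₂ h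
      rw [AddAction.orbitRel_apply, AddAction.mem_orbit_iff] at h
      obtain ⟨g, rfl⟩ := h
      rw [QuotientAddGroup.eq]
      exact ⟨-g, by rw [hφ_apply, heq, smul_neg]; abel⟩
    let q : AddAction.orbitRel.Quotient G S → G ⧸ φ.range :=
      Quotient.lift (fun s => QuotientAddGroup.mk (f s)) hcompat
    have hfibq : ∀ c : G ⧸ φ.range, (q ⁻¹' {c}).Finite := by
      intro c
      obtain ⟨t, rfl⟩ := QuotientAddGroup.mk'_surjective φ.range c
      have hsub : q ⁻¹' {QuotientAddGroup.mk' φ.range t} ⊆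
          (fun x : S => (Quotient.mk'' x : AddAction.orbitRel.Quotient G S)) '' (f ⁻¹' {t}) := by
        rintro o ho
        induction o using Quotient.inductionOn' with
        | h s =>
          have : (QuotientAddGroup.mk (f s) : G ⧸ φ.range) = QuotientAddGroup.mk t := ho
          rw [QuotientAddGroup.eq] at this
          obtain ⟨g, hg⟩ := this
          rw [hφ_apply] at hg
          refine ⟨g +ᵥ s, ?_, ?_⟩
          · simp only [Set.mem_preimage, Set.mem_singleton_iff, heq]
            rw [hg]; abel
          · exact Quotient.sound' ((AddAction.orbitRel_apply).mpr (AddAction.mem_orbit s g))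
      exact ((hfib t).image _).subset hsub
    have : Set.Finite (Set.univ : Set (AddAction.orbitRel.Quotient G S)) := by
      have : (Set.univ : Set (AddAction.orbitRel.Quotient G S)) =
          ⋃ c : G ⧸ φ.range, q ⁻¹' {c} := by
        ext o; simp
      rw [this]
      exact Set.finite_iUnion hfibq
    exact Set.finite_univ_iff.mp this
  · -- finite stabilizers
    intro s
    have hsub : ∀ g ∈ AddAction.stabilizer G s, g ∈ φ.ker := by
      intro g hg
      have : f (g +ᵥ s) = f s := by rw [hg]
      rw [heq] at this
      have : r • g = 0 := by
        have := add_right_cancel (a := r • g) (b := f s) (c := 0) (by rwa [zero_add])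
        exact this
      rw [AddMonoidHom.mem_ker, hφ_apply]
      exact this
    exact Finite.of_injective
      (fun x : AddAction.stabilizer G s => (⟨x.1, hsub x.1 x.2⟩ : φ.ker))
      (fun a b h => Subtype.ext (by simpa using congrArg Subtype.val h))
end
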